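/- arXiv:math/0301070 — 3 statements merged into one kernel-verified Lean document; each statement's English description precedes it below -/
import Mathlib

section
/- Fix real numbers λ_1 < … < λ_{n−1}. The map F sending (μ_1,…,μ_n) to (ξ_1,…,ξ_{n−1},η), where ξ_α = −∏_{p=1}^{n}(μ_p−λ_α) / ∏_{1≤β≤n−1, β≠α}(λ_β−λ_α) and η = Σ_{p=1}^{n} μ_p − Σ_{β=1}^{n−1} λ_β, is a bijection from the open set {(μ_1,…,μ_n) ∈ ℝ^n : μ_1 < λ_1 < μ_2 < λ_2 < … < λ_{n−1} < μ_n} onto the open set {(ξ_1,…,ξ_{n−1},η) ∈ ℝ^n : ξ_1 > 0, …, ξ_{n−1} > 0, η ∈ ℝ}. -/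
open MeasureTheory Complex Finset

noncomputable section

/-- `mval μ p` is the `p`-th coordinate of `μ : Fin n → ℝ` in 1-based indexing
(meaningful for `1 ≤ p ≤ n`); junk value `0` outside this range. -/
def mval {n : ℕ} (μ : Fin n → ℝ) (p : ℕ) : ℝ :=
  if h : 1 ≤ p ∧ p ≤ n then μ ⟨p - 1, by omega⟩ else 0

/-- The interlacing domain: `μ_1 < λ_1 < μ_2 < λ_2 < … < λ_{n-1} < μ_n`. -/
def Xi (n : ℕ) (lam : ℕ → ℝ) : Set (Fin n → ℝ) :=
  {μ | ∀ α : ℕ, 1 ≤ α → α ≤ n - 1 → mval μ α < lam α ∧ lam α < mval μ (α + 1)}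

/-- `ξ_α = -∏_{p=1}^n (μ_p - λ_α) / ∏_{β ≠ α} (λ_β - λ_α)`. -/
def xiv (n : ℕ) (lam : ℕ → ℝ) (μ : Fin n → ℝ) (α : ℕ) : ℝ :=
  -(∏ p ∈ Icc 1 n, (mval μ p - lam α)) /
    ∏ β ∈ (Icc 1 (n - 1)).erase α, (lam β - lam α)

/-- `η = Σ_p μ_p - Σ_β λ_β`. -/
def etav (n : ℕ) (lam : ℕ → ℝ) (μ : Fin n → ℝ) : ℝ :=
  ∑ p ∈ Icc 1 n, mval μ p - ∑ β ∈ Icc 1 (n - 1), lam β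

/-- The Anderson-type change of variables `μ ↦ (ξ_1, …, ξ_{n-1}, η)`. -/
def Fmap (n : ℕ) (lam : ℕ → ℝ) (μ : Fin n → ℝ) : Fin n → ℝ :=
  fun k => if k.1 + 1 ≤ n - 1 then xiv n lam μ (k.1 + 1) else etav n lam μ

/-!
Write `P_μ = ∏ p, (X - μ_p)` and `Λ = ∏ β, (X - λ_β)`. Then `ξ_α = -P_μ(λ_α) / Λ'(λ_α)`, and `η`
is `-Σ λ_β` minus the subleading coefficient of `P_μ`. So `(ξ, η)` records the values of the monic
degree-`n` polynomial `P_μ` at the `n - 1` nodes `λ_α` together with its subleading coefficient,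
and by Lagrange interpolation these data determine a monic polynomial of degree `n`, each choice
of them occurring. Interlacing of `μ` with the nodes forces `(-1)^(n-α) P_μ(λ_α) > 0`, while
`(-1)^(n-α) Λ'(λ_α) < 0`, which gives `ξ_α > 0`. Conversely, a monic `P` with that sign pattern
has, by the intermediate value theorem, a root in each of the `n` gaps
`(-∞, λ_1), (λ_1, λ_2), …, (λ_{n-1}, ∞)`, hence `P = P_μ` for an interlacing `μ`.
-/

open Polynomial Lagrange Filter

namespace Polynomial

theorem Monic.eventually_eval_pos_atTop {P : ℝ[X]} (hP : P.Monic) :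
    ∀ᶠ x in atTop, 0 < P.eval x :=
  P.isEquivalent_atTop_lead.eventually_pos <| by
    filter_upwards [eventually_gt_atTop 0] with x hx
    simp only [hP.leadingCoeff, one_mul]
    positivity

theorem Monic.eventually_neg_one_pow_mul_eval_pos_atBot {P : ℝ[X]} (hP : P.Monic) :
    ∀ᶠ x in atBot, 0 < (-1) ^ P.natDegree * P.eval x :=
  (Asymptotics.IsEquivalent.refl.mul P.isEquivalent_atBot_lead).eventually_pos <| by
    filter_upwards [eventually_lt_atBot 0] with x hx
    simp only [Pi.mul_apply, hP.leadingCoeff, one_mul, ← mul_pow]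
    exact pow_pos (by linarith) _

theorem exists_isRoot_mem_Ioo_of_mul_neg {P : ℝ[X]} {a b : ℝ} (hab : a ≤ b)
    (h : P.eval a * P.eval b < 0) : ∃ x ∈ Set.Ioo a b, P.IsRoot x := by
  rcases mul_neg_iff.mp h with ⟨ha, hb⟩ | ⟨ha, hb⟩
  · exact intermediate_value_Ioo' hab P.continuousOn ⟨hb, ha⟩
  · exact intermediate_value_Ioo hab P.continuousOn ⟨ha, hb⟩

theorem exists_isRoot_of_neg_one_pow_mul_pos {P : ℝ[X]} {n : ℕ} {x : ℕ → ℝ}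
    (hx : ∀ k < n, x k < x (k + 1)) (hsign : ∀ k ≤ n, 0 < (-1) ^ (n - k) * P.eval (x k)) :
    ∃ μ : Fin n → ℝ, ∀ i : Fin n, μ i ∈ Set.Ioo (x i) (x (i + 1)) ∧ P.IsRoot (μ i) := by
  have hroot (i : Fin n) : ∃ y ∈ Set.Ioo (x i) (x (i + 1)), P.IsRoot y := by
    refine exists_isRoot_mem_Ioo_of_mul_neg (hx i i.2).le ?_
    have h₀ := hsign i i.2.le
    have h₁ := hsign (i + 1) i.2
    rw [show n - i = n - (i + 1) + 1 by omega, pow_succ] at h₀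
    have hsq : ((-1 : ℝ) ^ (n - (i + 1))) ^ 2 = 1 := by rw [← pow_mul, mul_comm, pow_mul]; norm_num
    nlinarith [mul_pos h₀ h₁]
  choose μ hμ using hroot
  exact ⟨μ, hμ⟩

theorem Monic.eq_nodal_of_isRoot {F : Type*} [Field F] {n : ℕ} {P : F[X]} (hP : P.Monic)
    (hdeg : P.natDegree = n) {μ : Fin n → F} (hμ : Function.Injective μ)
    (hroot : ∀ i, P.IsRoot (μ i)) : P = nodal univ μ := by
  refine eq_of_degree_sub_lt_of_eval_index_eq univ hμ.injOn ?_ fun i _ => ?_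
  · have hPdeg : P.degree = #(univ : Finset (Fin n)) := by
      rw [degree_eq_natDegree hP.ne_zero, hdeg, card_univ, Fintype.card_fin]
    rw [← hPdeg]
    exact degree_sub_lt_left (by rw [hPdeg, degree_nodal]) hP.ne_zero
      (by rw [hP.leadingCoeff, nodal_monic.leadingCoeff])
  · rw [(hroot i).eq_zero, eval_nodal_at_node (mem_univ i)]

variable {F ι : Type*} [Field F] {s : Finset ι} {v : ι → F}

theorem Monic.eq_of_nextCoeff_eq_of_eval_eq {P Q : F[X]} (hP : P.Monic) (hQ : Q.Monic)
    (hPd : P.natDegree = #s + 1) (hQd : Q.natDegree = #s + 1) (hvs : Set.InjOn v s)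
    (hnext : P.nextCoeff = Q.nextCoeff) (heval : ∀ i ∈ s, P.eval (v i) = Q.eval (v i)) :
    P = Q := by
  refine eq_of_degree_sub_lt_of_eval_index_eq s hvs (degree_lt_iff_coeff_zero _ _ |>.mpr ?_) heval
  intro m hm
  rw [coeff_sub, sub_eq_zero]
  obtain rfl | rfl | hm := (show m = #s ∨ m = #s + 1 ∨ #s + 1 < m by omega)
  · rwa [nextCoeff_of_natDegree_pos (by omega), nextCoeff_of_natDegree_pos (by omega), hPd, hQd,
      Nat.add_sub_cancel] at hnext
  · rw [← hPd, hP.coeff_natDegree, hPd, ← hQd, hQ.coeff_natDegree]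
  · rw [coeff_eq_zero_of_natDegree_lt (by omega), coeff_eq_zero_of_natDegree_lt (by omega)]

theorem exists_monic_nextCoeff_eq_eval_eq [DecidableEq ι] (hvs : Set.InjOn v s) (c : F)
    (r : ι → F) :
    ∃ P : F[X], P.Monic ∧ P.natDegree = #s + 1 ∧ P.nextCoeff = c ∧
      ∀ i ∈ s, P.eval (v i) = r i := by
  set A := (X - C (-c - ∑ i ∈ s, v i)) * nodal s v
  have hA : A.Monic := (monic_X_sub_C _).mul nodal_monic
  have hAd : A.natDegree = #s + 1 := by
    rw [(monic_X_sub_C _).natDegree_mul nodal_monic, natDegree_X_sub_C, natDegree_nodal, add_comm]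
  have hlt : (interpolate s v r).degree < #s := degree_interpolate_lt _ hvs
  have hlt' : (interpolate s v r).degree < A.degree := by
    rw [degree_eq_natDegree hA.ne_zero, hAd]
    exact hlt.trans (by exact_mod_cast Nat.lt_succ_self _)
  have hd : (A + interpolate s v r).natDegree = #s + 1 := by
    rw [natDegree_add_eq_left_of_degree_lt hlt', hAd]
  refine ⟨A + interpolate s v r, hA.add_of_left hlt', hd, ?_, fun i hi => ?_⟩
  · rw [nextCoeff_of_natDegree_pos (by omega), hd, Nat.add_sub_cancel, coeff_add,
      coeff_eq_zero_of_degree_lt hlt, add_zero, ← Nat.add_sub_cancel (n := #s) (m := 1), ← hAd,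
      ← nextCoeff_of_natDegree_pos (by omega), (monic_X_sub_C _).nextCoeff_mul nodal_monic,
      nextCoeff_X_sub_C, nodal_eq, prod_X_sub_C_nextCoeff]
    ring
  · rw [eval_add, eval_mul, eval_nodal_at_node hi, mul_zero, zero_add,
      eval_interpolate_at_node _ hvs hi]

end Polynomial

theorem Finset.neg_one_pow_card_mul_prod_pos {ι R : Type*} [DecidableEq ι] [CommRing R]
    [LinearOrder R] [IsStrictOrderedRing R] {s t : Finset ι} {f : ι → R} (hts : t ⊆ s)
    (hneg : ∀ i ∈ t, f i < 0) (hpos : ∀ i ∈ s \ t, 0 < f i) :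
    0 < (-1) ^ #t * ∏ i ∈ s, f i := by
  rw [← prod_sdiff hts, mul_left_comm, ← prod_neg]
  exact mul_pos (prod_pos hpos) (prod_pos fun i hi => neg_pos.mpr (hneg i hi))

@[to_additive]
theorem Fin.prod_univ_eq_prod_Icc {M : Type*} [CommMonoid M] (n : ℕ) (g : ℕ → M) :
    ∏ i : Fin n, g (i + 1) = ∏ p ∈ Icc 1 n, g p := by
  rw [Fin.prod_univ_eq_prod_range (fun i => g (i + 1)), range_eq_Ico, prod_Ico_add',
    Ico_add_one_right_eq_Icc]

theorem Lagrange.range_eq_setOf_isRoot_nodal {ι R : Type*} [Fintype ι] [CommRing R] [IsDomain R]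
    (v : ι → R) : Set.range v = {x | (nodal univ v).IsRoot x} := by
  ext x
  simp only [Set.mem_range, Set.mem_ofPred_eq, IsRoot.def, eval_nodal, prod_eq_zero_iff, mem_univ,
    true_and, sub_eq_zero]
  exact exists_congr fun _ => eq_comm

theorem StrictMono.eq_of_nodal_univ_eq {R : Type*} [CommRing R] [IsDomain R] [Preorder R]
    {n : ℕ} {μ μ' : Fin n → R} (hμ : StrictMono μ)
    (hμ' : StrictMono μ') (h : nodal univ μ = nodal univ μ') : μ = μ' :=
  (hμ.range_inj hμ').mp (by rw [range_eq_setOf_isRoot_nodal, h, range_eq_setOf_isRoot_nodal])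

section Anderson

variable {n : ℕ} {lam : ℕ → ℝ}

theorem mval_add_one (μ : Fin n → ℝ) (i : Fin n) : mval μ (i + 1) = μ i := by
  simp [mval, i.2]

theorem eq_of_forall_mval_eq {v w : Fin n → ℝ} (h : ∀ p, 1 ≤ p → p ≤ n → mval v p = mval w p) :
    v = w := by
  funext i
  rw [← mval_add_one v i, ← mval_add_one w i]
  exact h _ (by omega) i.2

theorem mval_Fmap_of_le (μ : Fin n → ℝ) {α : ℕ} (h1 : 1 ≤ α) (h2 : α ≤ n - 1) :
    mval (Fmap n lam μ) α = xiv n lam μ α := by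
  obtain ⟨k, rfl⟩ : ∃ k, α = k + 1 := ⟨α - 1, by omega⟩
  rw [mval_add_one _ ⟨k, by omega⟩, Fmap, if_pos h2]

theorem mval_Fmap_self (hn : 1 ≤ n) (μ : Fin n → ℝ) : mval (Fmap n lam μ) n = etav n lam μ := by
  obtain ⟨k, rfl⟩ : ∃ k, n = k + 1 := ⟨n - 1, by omega⟩
  rw [mval_add_one _ ⟨k, by omega⟩, Fmap, if_neg (show ¬k + 1 ≤ k + 1 - 1 by omega)]

theorem xiv_eq_eval_nodal (μ : Fin n → ℝ) {α : ℕ} (hα : α ∈ Icc 1 (n - 1)) :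
    xiv n lam μ α =
      -(nodal univ μ).eval (lam α) / (derivative (nodal (Icc 1 (n - 1)) lam)).eval (lam α) := by
  have h2 : 2 ≤ n := by rw [mem_Icc] at hα; omega
  have hnum : ∏ p ∈ Icc 1 n, (mval μ p - lam α) = (-1) ^ n * (nodal univ μ).eval (lam α) := by
    rw [← Fin.prod_univ_eq_prod_Icc, eval_nodal,
      show (-1 : ℝ) ^ n = (-1) ^ #(univ : Finset (Fin n)) by simp, ← prod_neg]
    simp only [mval_add_one, neg_sub]
  have hsign : (-1 : ℝ) ^ #((Icc 1 (n - 1)).erase α) = (-1) ^ n := by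
    rw [card_erase_of_mem hα, Nat.card_Icc, show n - 1 + 1 - 1 - 1 = n - 2 by omega]
    nth_rw 2 [← Nat.sub_add_cancel h2]
    rw [pow_add]
    norm_num
  have hden : ∏ β ∈ (Icc 1 (n - 1)).erase α, (lam β - lam α) =
      (-1) ^ n * (derivative (nodal (Icc 1 (n - 1)) lam)).eval (lam α) := by
    rw [eval_nodal_derivative_eval_node_eq hα, eval_nodal, ← hsign, ← prod_neg]
    simp only [neg_sub]
  rw [xiv, hnum, hden, ← mul_neg, mul_div_mul_left _ _ (pow_ne_zero _ (by norm_num))]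

theorem etav_eq_nextCoeff_nodal (μ : Fin n → ℝ) :
    etav n lam μ = -(nodal univ μ).nextCoeff - ∑ β ∈ Icc 1 (n - 1), lam β := by
  rw [etav, ← Fin.sum_univ_eq_sum_Icc, nodal_eq, prod_X_sub_C_nextCoeff, neg_neg]
  simp only [mval_add_one]

theorem strictMono_of_mem_Xi (hlam : StrictMonoOn lam (Set.Icc 1 (n - 1))) {μ : Fin n → ℝ}
    (hμ : μ ∈ Xi n lam) : StrictMono μ := by
  intro i j hij
  have hij' : (i : ℕ) < j := hij
  rw [← mval_add_one μ i, ← mval_add_one μ j]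
  calc mval μ (i + 1) < lam (i + 1) := (hμ (i + 1) (by omega) (by omega)).1
    _ ≤ lam j := hlam.monotoneOn ⟨by omega, by omega⟩ ⟨by omega, by omega⟩ (by omega)
    _ < mval μ (j + 1) := (hμ j (by omega) (by omega)).2

theorem neg_one_pow_mul_eval_nodal_pos (hlam : StrictMonoOn lam (Set.Icc 1 (n - 1)))
    {μ : Fin n → ℝ} (hμ : μ ∈ Xi n lam) {α : ℕ} (hα : α ∈ Icc 1 (n - 1)) :
    0 < (-1) ^ (n - α) * (nodal univ μ).eval (lam α) := by
  rw [mem_Icc] at hα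
  have hsign := neg_one_pow_card_mul_prod_pos (s := Icc 1 n) (t := Icc (α + 1) n)
    (f := fun p => lam α - mval μ p) (Icc_subset_Icc (by omega) le_rfl)
    (fun p hp => by
      rw [mem_Icc] at hp
      have hlt := (hμ (p - 1) (by omega) (by omega)).2
      rw [Nat.sub_add_cancel (by omega)] at hlt
      exact sub_neg.mpr <|
        (hlam.monotoneOn ⟨hα.1, hα.2⟩ ⟨by omega, by omega⟩ (by omega)).trans_lt hlt)
    (fun p hp => by
      rw [Finset.mem_sdiff, mem_Icc, mem_Icc] at hp
      exact sub_pos.mpr <| (hμ p hp.1.1 (by omega)).1.trans_le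
        (hlam.monotoneOn ⟨hp.1.1, by omega⟩ ⟨hα.1, hα.2⟩ (by omega)))
  rw [Nat.card_Icc, Nat.add_sub_add_right, ← Fin.prod_univ_eq_prod_Icc] at hsign
  simpa only [eval_nodal, mval_add_one] using hsign

theorem neg_one_pow_mul_eval_derivative_nodal_neg (hlam : StrictMonoOn lam (Set.Icc 1 (n - 1)))
    {α : ℕ} (hα : α ∈ Icc 1 (n - 1)) :
    (-1) ^ (n - α) * (derivative (nodal (Icc 1 (n - 1)) lam)).eval (lam α) < 0 := by
  have hsign := neg_one_pow_card_mul_prod_pos (s := (Icc 1 (n - 1)).erase α)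
    (t := Icc (α + 1) (n - 1)) (f := fun β => lam α - lam β)
    (fun β hβ => by simp only [mem_erase, mem_Icc] at hβ hα ⊢; omega)
    (fun β hβ => by
      simp only [mem_Icc] at hβ hα
      exact sub_neg.mpr (hlam ⟨hα.1, hα.2⟩ ⟨by omega, hβ.2⟩ (by omega)))
    (fun β hβ => by
      simp only [Finset.mem_sdiff, mem_erase, mem_Icc] at hβ hα
      exact sub_pos.mpr (hlam ⟨hβ.1.2.1, by omega⟩ ⟨hα.1, hα.2⟩ (by omega)))
  have hα' := mem_Icc.mp hα
  rw [eval_nodal_derivative_eval_node_eq hα, eval_nodal,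
    show n - α = n - 1 + 1 - (α + 1) + 1 by omega,
    pow_succ, mul_neg_one, neg_mul, neg_lt_zero, ← Nat.card_Icc]
  exact hsign

theorem exists_mem_Xi_nodal_eq (hn : 1 ≤ n) (hlam : StrictMonoOn lam (Set.Icc 1 (n - 1)))
    {P : ℝ[X]} (hP : P.Monic) (hdeg : P.natDegree = n)
    (hsign : ∀ α ∈ Icc 1 (n - 1), 0 < (-1) ^ (n - α) * P.eval (lam α)) :
    ∃ μ ∈ Xi n lam, nodal univ μ = P := by
  obtain ⟨a, ha, ha₁⟩ :=
    (hP.eventually_neg_one_pow_mul_eval_pos_atBot.and (eventually_lt_atBot (lam 1))).exists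
  obtain ⟨b, hb, hb₁⟩ :=
    (hP.eventually_eval_pos_atTop.and (eventually_gt_atTop (max a (lam (n - 1))))).exists
  rw [hdeg] at ha
  obtain ⟨hab, hlb⟩ := max_lt_iff.mp hb₁
  let x : ℕ → ℝ := fun k => if k = 0 then a else if k < n then lam k else b
  have hx : ∀ k < n, x k < x (k + 1) := by
    intro k hk
    obtain rfl | hk0 := Nat.eq_zero_or_pos k
    · by_cases h1 : 1 < n
      · simpa [x, h1] using ha₁
      · simpa [x, h1] using hab
    · by_cases h1 : k + 1 < n
      · simpa [x, hk0.ne', hk, h1] using hlam ⟨hk0, by omega⟩ ⟨by omega, by omega⟩ (lt_add_one k)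
      · obtain rfl : k = n - 1 := by omega
        simpa [x, hk0.ne', hk, h1] using hlb
  have hxsign : ∀ k ≤ n, 0 < (-1) ^ (n - k) * P.eval (x k) := by
    intro k hk
    simp only [x]
    split_ifs with h0 hlt
    · rwa [h0]
    · exact hsign k (mem_Icc.mpr ⟨by omega, by omega⟩)
    · rwa [show n - k = 0 by omega, pow_zero, one_mul]
  obtain ⟨μ, hμ⟩ := exists_isRoot_of_neg_one_pow_mul_pos hx hxsign
  have hXi : μ ∈ Xi n lam := by
    intro α h1 h2
    obtain ⟨k, rfl⟩ : ∃ k, α = k + 1 := ⟨α - 1, by omega⟩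
    have hlo := (hμ ⟨k, by omega⟩).1.2
    have hhi := (hμ ⟨k + 1, by omega⟩).1.1
    simp only [x] at hlo hhi
    rw [mval_add_one μ ⟨k, by omega⟩, mval_add_one μ ⟨k + 1, by omega⟩]
    rw [if_neg (by omega), if_pos (by omega)] at hlo hhi
    exact ⟨hlo, hhi⟩
  exact ⟨μ, hXi, (hP.eq_nodal_of_isRoot hdeg (strictMono_of_mem_Xi hlam hXi).injective
    fun i => (hμ i).2).symm⟩

theorem mapsTo_Fmap (hlam : StrictMonoOn lam (Set.Icc 1 (n - 1))) :
    Set.MapsTo (Fmap n lam) (Xi n lam)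
      {v : Fin n → ℝ | ∀ α : ℕ, 1 ≤ α → α ≤ n - 1 → 0 < mval v α} := by
  intro μ hμ α h1 h2
  have hα : α ∈ Icc 1 (n - 1) := mem_Icc.mpr ⟨h1, h2⟩
  rw [mval_Fmap_of_le μ h1 h2, xiv_eq_eval_nodal μ hα, neg_div,
    ← mul_div_mul_left _ _ (pow_ne_zero (n - α) (by norm_num : (-1 : ℝ) ≠ 0))]
  exact neg_pos.mpr (div_neg_of_pos_of_neg (neg_one_pow_mul_eval_nodal_pos hlam hμ hα)
    (neg_one_pow_mul_eval_derivative_nodal_neg hlam hα))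

theorem injOn_Fmap (hn : 1 ≤ n) (hlam : StrictMonoOn lam (Set.Icc 1 (n - 1))) :
    Set.InjOn (Fmap n lam) (Xi n lam) := by
  intro μ hμ μ' hμ' h
  have hdeg : #(univ : Finset (Fin n)) = #(Icc 1 (n - 1)) + 1 := by
    rw [card_univ, Fintype.card_fin, Nat.card_Icc]; omega
  refine (strictMono_of_mem_Xi hlam hμ).eq_of_nodal_univ_eq (strictMono_of_mem_Xi hlam hμ') ?_
  refine Monic.eq_of_nextCoeff_eq_of_eval_eq (s := Icc 1 (n - 1)) nodal_monic nodal_monic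
    (by rw [natDegree_nodal, hdeg]) (by rw [natDegree_nodal, hdeg])
    (by rw [coe_Icc]; exact hlam.injOn) ?_ fun α hα => ?_
  · have hη := congrArg (mval · n) h
    simp only [mval_Fmap_self hn, etav_eq_nextCoeff_nodal] at hη
    linarith
  · have hα' := mem_Icc.mp hα
    have hξ := congrArg (mval · α) h
    simp only [mval_Fmap_of_le _ hα'.1 hα'.2, xiv_eq_eval_nodal _ hα] at hξ
    have hΛ' := right_ne_zero_of_mul (neg_one_pow_mul_eval_derivative_nodal_neg hlam hα).ne
    rwa [div_left_inj' hΛ', neg_inj] at hξ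

theorem surjOn_Fmap (hn : 1 ≤ n) (hlam : StrictMonoOn lam (Set.Icc 1 (n - 1))) :
    Set.SurjOn (Fmap n lam) (Xi n lam)
      {v : Fin n → ℝ | ∀ α : ℕ, 1 ≤ α → α ≤ n - 1 → 0 < mval v α} := by
  intro v hv
  set Λ' : ℕ → ℝ := fun α => (derivative (nodal (Icc 1 (n - 1)) lam)).eval (lam α)
  obtain ⟨P, hPm, hPd, hPnext, hPeval⟩ := exists_monic_nextCoeff_eq_eval_eq
    (by rw [coe_Icc]; exact hlam.injOn) (-(mval v n + ∑ β ∈ Icc 1 (n - 1), lam β))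
    (fun α => -mval v α * Λ' α)
  have hsign : ∀ α ∈ Icc 1 (n - 1), 0 < (-1) ^ (n - α) * P.eval (lam α) := fun α hα => by
    rw [hPeval α hα, show (-1) ^ (n - α) * (-mval v α * Λ' α) =
      mval v α * -((-1) ^ (n - α) * Λ' α) by ring]
    have hα' := mem_Icc.mp hα
    exact mul_pos (hv α hα'.1 hα'.2)
      (neg_pos.mpr (neg_one_pow_mul_eval_derivative_nodal_neg hlam hα))
  obtain ⟨μ, hμ, rfl⟩ :=
    exists_mem_Xi_nodal_eq hn hlam hPm (by rw [hPd, Nat.card_Icc]; omega) hsign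
  refine ⟨μ, hμ, eq_of_forall_mval_eq fun p h1 h2 => ?_⟩
  obtain h2 | rfl := (show p ≤ n - 1 ∨ p = n by omega)
  · have hp : p ∈ Icc 1 (n - 1) := mem_Icc.mpr ⟨h1, h2⟩
    have hΛ' := right_ne_zero_of_mul (neg_one_pow_mul_eval_derivative_nodal_neg hlam hp).ne
    rw [mval_Fmap_of_le μ h1 h2, xiv_eq_eval_nodal μ hp, hPeval p hp, neg_mul, neg_neg,
      mul_div_cancel_right₀ _ hΛ']
  · rw [mval_Fmap_self hn, etav_eq_nextCoeff_nodal, hPnext]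
    ring

end Anderson

/-- Lemma 2.3(a): the map `μ ↦ (ξ, η)` is a bijection from the interlacing domain onto
`{ξ_1 > 0, …, ξ_{n-1} > 0, η ∈ ℝ}`. -/
theorem anderson_bijection
    (n : ℕ) (hn : 1 ≤ n) (lam : ℕ → ℝ)
    (hlam : ∀ α : ℕ, 1 ≤ α → α + 1 ≤ n - 1 → lam α < lam (α + 1)) :
    Set.BijOn (Fmap n lam) (Xi n lam)
      {v : Fin n → ℝ | ∀ α : ℕ, 1 ≤ α → α ≤ n - 1 → 0 < mval v α} := by
  have hmono : StrictMonoOn lam (Set.Icc 1 (n - 1)) :=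
    strictMonoOn_of_lt_add_one Set.ordConnected_Icc fun α _ hα hα' => hlam α hα.1 hα'.2
  exact ⟨mapsTo_Fmap hmono, injOn_Fmap hn hmono, surjOn_Fmap hn hmono⟩
end
end

section
/- Fix real numbers 0 < λ_1 < … < λ_{n−1} and let μ_1 < λ_1 < μ_2 < … < λ_{n−1} < μ_n be reals interlacing them. Define ξ_α = −∏_{p=1}^{n}(μ_p−λ_α) / ∏_{1≤β≤n−1, β≠α}(λ_β−λ_α) and η = Σ_{p=1}^{n} μ_p − Σ_{β=1}^{n−1} λ_β. Then μ_1 > 0 holds if and only if η > Σ_{α=1}^{n−1} ξ_α/λ_α (all ξ_α being automatically positive by the interlacing). -/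
open MeasureTheory Complex Finset

noncomputable section

open Polynomial in
lemma anderson_key (n : ℕ) (hn : 2 ≤ n) (lam : ℕ → ℝ)
    (h0 : ∀ β ∈ Icc 1 (n - 1), lam β ≠ 0)
    (hinj : Set.InjOn lam ↑(Icc 1 (n - 1))) (μ : Fin n → ℝ) :
    ∏ p ∈ Icc 1 n, mval μ p =
      (etav n lam μ - ∑ α ∈ Icc 1 (n - 1), xiv n lam μ α / lam α) *
        ∏ β ∈ Icc 1 (n - 1), lam β := by
  classical
  set η : ℝ := etav n lam μ with hη
  set Wp : ℝ[X] := ∏ p ∈ Icc 1 n, (X - C (mval μ p)) with hWp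
  set Wq : ℝ[X] := ∏ β ∈ Icc 1 (n - 1), (X - C (lam β)) with hWq
  set sp : ℝ := (-1) ^ n with hsp
  set sq : ℝ := (-1) ^ (n - 1) with hsq
  set f : ℝ[X] := C sp * Wp + (X - C η) * (C sq * Wq) with hf
  have hcardp : #(Icc 1 n) = n := by simp
  have hcardq : #(Icc 1 (n - 1)) = n - 1 := by simp
  -- degrees
  have hWpm : Wp.Monic := monic_prod_of_monic _ _ fun i _ => monic_X_sub_C _
  have hWqm : Wq.Monic := monic_prod_of_monic _ _ fun i _ => monic_X_sub_C _
  have hWpd : Wp.natDegree = n := by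
    rw [hWp, natDegree_prod_of_monic _ _ fun i _ => monic_X_sub_C _]
    simp
  have hWqd : Wq.natDegree = n - 1 := by
    rw [hWq, natDegree_prod_of_monic _ _ fun i _ => monic_X_sub_C _]
    simp
  have hWptop : Wp.coeff n = 1 := by rw [← hWpd]; exact hWpm.coeff_natDegree
  have hWqtop : Wq.coeff (n - 1) = 1 := by rw [← hWqd]; exact hWqm.coeff_natDegree
  have hWpsub : Wp.coeff (n - 1) = -∑ p ∈ Icc 1 n, mval μ p := by
    have := prod_X_sub_C_coeff_card_pred (Icc 1 n) (mval μ) (by rw [hcardp]; omega)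
    rwa [hcardp] at this
  have hWqsub : Wq.coeff (n - 2) = -∑ β ∈ Icc 1 (n - 1), lam β := by
    have := prod_X_sub_C_coeff_card_pred (Icc 1 (n - 1)) lam (by rw [hcardq]; omega)
    rw [hcardq] at this
    have h2 : n - 1 - 1 = n - 2 := by omega
    rwa [h2] at this
  have expand : ∀ j : ℕ, f.coeff (j + 1) =
      sp * Wp.coeff (j + 1) + (sq * Wq.coeff j - η * (sq * Wq.coeff (j + 1))) := by
    intro j
    simp [hf, sub_mul, coeff_C_mul, coeff_X_mul, mul_comm]
  have hsq' : sp = -sq := by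
    obtain ⟨m, rfl⟩ : ∃ m, n = m + 1 := ⟨n - 1, by omega⟩
    simp [hsp, hsq, pow_succ]
  have hdeg : f.degree < ((#(Icc 1 (n - 1)) : ℕ) : WithBot ℕ) := by
    rw [hcardq, degree_lt_iff_coeff_zero]
    intro k hk
    obtain ⟨j, rfl⟩ : ∃ j, k = j + 1 := ⟨k - 1, by omega⟩
    rw [expand j]
    rcases eq_or_lt_of_le hk with h1 | h1
    · -- j + 1 = n - 1
      have e1 : j + 1 = n - 1 := h1.symm
      have e2 : j = n - 2 := by omega
      have e3 : Wq.coeff (j + 1) = 1 := by rw [e1, hWqtop]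
      rw [e3, e1, e2, hWpsub, hWqsub, hsq']
      have : η = ∑ p ∈ Icc 1 n, mval μ p - ∑ β ∈ Icc 1 (n - 1), lam β := rfl
      rw [this]; ring
    · rcases eq_or_lt_of_le (show n ≤ j + 1 by omega) with h2 | h2
      · -- j + 1 = n
        have e1 : j = n - 1 := by omega
        have e3 : Wq.coeff (j + 1) = 0 :=
          coeff_eq_zero_of_natDegree_lt (by omega : Wq.natDegree < j + 1)
        rw [e3, ← h2, hWptop, e1, hWqtop, hsq']
        ring
      · -- j + 1 > n
        have e1 : Wp.coeff (j + 1) = 0 :=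
          coeff_eq_zero_of_natDegree_lt (by omega)
        have e2 : Wq.coeff j = 0 := coeff_eq_zero_of_natDegree_lt (by omega)
        have e3 : Wq.coeff (j + 1) = 0 := coeff_eq_zero_of_natDegree_lt (by omega)
        rw [e1, e2, e3]; ring
  have hmain := Lagrange.eq_interpolate hinj hdeg
  have heval := congrArg (Polynomial.eval 0) hmain
  have flip : ∀ (t : Finset ℕ) (g : ℕ → ℝ) (x : ℝ),
      ∏ i ∈ t, (g i - x) = (-1 : ℝ) ^ #t * ∏ i ∈ t, (x - g i) := by
    intro t g x
    rw [← Finset.prod_const (-1 : ℝ), ← Finset.prod_mul_distrib]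
    exact Finset.prod_congr rfl fun i _ => by ring
  have hWpe : ∀ x : ℝ, Wp.eval x = ∏ p ∈ Icc 1 n, (x - mval μ p) := by
    intro x; simp [hWp, eval_prod]
  have hWqe : ∀ x : ℝ, Wq.eval x = ∏ β ∈ Icc 1 (n - 1), (x - lam β) := by
    intro x; simp [hWq, eval_prod]
  have hL : f.eval 0 = (∏ p ∈ Icc 1 n, mval μ p) - η * ∏ β ∈ Icc 1 (n - 1), lam β := by
    have h1 : sp * Wp.eval 0 = ∏ p ∈ Icc 1 n, mval μ p := by
      have h := flip (Icc 1 n) (mval μ) 0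
      rw [hcardp] at h
      rw [hWpe, hsp, ← h]
      exact Finset.prod_congr rfl fun i _ => by ring
    have h2 : sq * Wq.eval 0 = ∏ β ∈ Icc 1 (n - 1), lam β := by
      have h := flip (Icc 1 (n - 1)) lam 0
      rw [hcardq] at h
      rw [hWqe, hsq, ← h]
      exact Finset.prod_congr rfl fun i _ => by ring
    have : f.eval 0 = sp * Wp.eval 0 + (0 - η) * (sq * Wq.eval 0) := by
      simp [hf]
    rw [this, h1, h2]; ring
  have hR : (Lagrange.interpolate (Icc 1 (n - 1)) lam fun i => f.eval (lam i)).eval 0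
      = ∑ α ∈ Icc 1 (n - 1), f.eval (lam α) * (Lagrange.basis (Icc 1 (n - 1)) lam α).eval 0 := by
    rw [Lagrange.interpolate_apply, eval_finset_sum]
    exact Finset.sum_congr rfl fun α _ => by rw [eval_mul, eval_C]
  have hterm : ∀ α ∈ Icc 1 (n - 1),
      f.eval (lam α) * (Lagrange.basis (Icc 1 (n - 1)) lam α).eval 0
        = -(xiv n lam μ α / lam α) * ∏ β ∈ Icc 1 (n - 1), lam β := by
    intro α hα
    have hWq0 : Wq.eval (lam α) = 0 := by
      rw [hWqe]
      exact Finset.prod_eq_zero hα (by ring)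
    have hfα : f.eval (lam α) = ∏ p ∈ Icc 1 n, (mval μ p - lam α) := by
      have h := flip (Icc 1 n) (mval μ) (lam α)
      rw [hcardp] at h
      have : f.eval (lam α) = sp * ∏ p ∈ Icc 1 n, (lam α - mval μ p) := by
        simp [hf, hWq0, hWpe]
      rw [this, hsp]
      exact h.symm
    have hb : (Lagrange.basis (Icc 1 (n - 1)) lam α).eval 0
        = (∏ β ∈ (Icc 1 (n - 1)).erase α, lam β) *
            (∏ β ∈ (Icc 1 (n - 1)).erase α, (lam β - lam α))⁻¹ := by
      have hbd : ∀ β ∈ (Icc 1 (n - 1)).erase α,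
          (Lagrange.basisDivisor (lam α) (lam β)).eval 0 = lam β * (lam β - lam α)⁻¹ := by
        intro β _
        rw [Lagrange.basisDivisor]
        simp only [eval_mul, eval_C, eval_sub, eval_X]
        rw [show lam β - lam α = -(lam α - lam β) by ring, inv_neg]
        ring
      rw [Lagrange.basis, eval_prod, Finset.prod_congr rfl hbd, Finset.prod_mul_distrib,
        Finset.prod_inv_distrib]
    have hD : ∏ β ∈ (Icc 1 (n - 1)).erase α, (lam β - lam α) ≠ 0 := by
      rw [Finset.prod_ne_zero_iff]
      intro β hβ
      refine sub_ne_zero.mpr fun h => (Finset.ne_of_mem_erase hβ) ?_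
      exact hinj (Finset.mem_coe.mpr (Finset.mem_of_mem_erase hβ)) (Finset.mem_coe.mpr hα) h
    have hlα : lam α ≠ 0 := h0 α hα
    have hLsplit : ∏ β ∈ Icc 1 (n - 1), lam β
        = lam α * ∏ β ∈ (Icc 1 (n - 1)).erase α, lam β :=
      (Finset.mul_prod_erase _ _ hα).symm
    rw [hfα, hb, xiv, hLsplit]
    field_simp
  rw [hL, hR, Finset.sum_congr rfl hterm, ← Finset.sum_mul] at heval
  have hneg : ∑ α ∈ Icc 1 (n - 1), -(xiv n lam μ α / lam α)
      = -∑ α ∈ Icc 1 (n - 1), xiv n lam μ α / lam α := by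
    simp
  rw [hneg] at heval
  linear_combination heval

/-- Lemma 2.3(b): for positive `λ`'s, `μ_1 > 0` iff `η > Σ_α ξ_α/λ_α`. -/
theorem anderson_positivity
    (n : ℕ) (hn : 1 ≤ n) (lam : ℕ → ℝ)
    (hlam0 : ∀ α : ℕ, 1 ≤ α → α ≤ n - 1 → 0 < lam α)
    (hlam : ∀ α : ℕ, 1 ≤ α → α + 1 ≤ n - 1 → lam α < lam (α + 1))
    (μ : Fin n → ℝ) (hμ : μ ∈ Xi n lam) :
    0 < mval μ 1 ↔
      ∑ α ∈ Icc 1 (n - 1), xiv n lam μ α / lam α < etav n lam μ := by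
  rcases eq_or_lt_of_le hn with h1 | h2
  · -- n = 1
    have hn1 : n = 1 := h1.symm
    subst hn1
    have e : Icc 1 (1 - 1) = (∅ : Finset ℕ) := rfl
    simp [e, etav]
  · -- n ≥ 2
    have key : ∀ d a : ℕ, 1 ≤ a → a + d + 1 ≤ n - 1 → lam a < lam (a + d + 1) := by
      intro d
      induction d with
      | zero => intro a ha h; simpa using hlam a ha (by omega)
      | succ e ih =>
        intro a ha h
        exact lt_trans (ih a ha (by omega)) (hlam (a + e + 1) (by omega) (by omega))
    have hmono : ∀ a b : ℕ, 1 ≤ a → a < b → b ≤ n - 1 → lam a < lam b := by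
      intro a b ha hab hb
      obtain ⟨d, rfl⟩ : ∃ d, b = a + d + 1 := ⟨b - a - 1, by omega⟩
      exact key d a ha hb
    have hinj : Set.InjOn lam ↑(Icc 1 (n - 1)) := by
      intro x hx y hy hxy
      rw [Finset.coe_Icc, Set.mem_Icc] at hx hy
      rcases lt_trichotomy x y with h | h | h
      · exact absurd hxy (ne_of_lt (hmono x y hx.1 h hy.2))
      · exact h
      · exact absurd hxy.symm (ne_of_lt (hmono y x hy.1 h hx.2))
    have h0 : ∀ β ∈ Icc 1 (n - 1), lam β ≠ 0 := by
      intro β hβ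
      rw [Finset.mem_Icc] at hβ
      exact ne_of_gt (hlam0 β hβ.1 hβ.2)
    have hkey := anderson_key n h2 lam h0 hinj μ
    have hLpos : 0 < ∏ β ∈ Icc 1 (n - 1), lam β := by
      apply Finset.prod_pos
      intro β hβ
      rw [Finset.mem_Icc] at hβ
      exact hlam0 β hβ.1 hβ.2
    have hsplit : Icc 1 n = insert 1 (Icc 2 n) := by
      ext a
      simp only [Finset.mem_Icc, Finset.mem_insert]
      omega
    have h1n : (1 : ℕ) ∉ Icc 2 n := by simp
    have hPpos : 0 < ∏ p ∈ Icc 2 n, mval μ p := by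
      apply Finset.prod_pos
      intro p hp
      rw [Finset.mem_Icc] at hp
      have h := hμ (p - 1) (by omega) (by omega)
      have hpe : p - 1 + 1 = p := by omega
      rw [hpe] at h
      exact lt_trans (hlam0 (p - 1) (by omega) (by omega)) h.2
    have hprod : ∏ p ∈ Icc 1 n, mval μ p = mval μ 1 * ∏ p ∈ Icc 2 n, mval μ p := by
      rw [hsplit, Finset.prod_insert h1n]
    rw [hprod] at hkey
    constructor
    · intro h
      have hpos : 0 < (etav n lam μ - ∑ α ∈ Icc 1 (n - 1), xiv n lam μ α / lam α) *
          ∏ β ∈ Icc 1 (n - 1), lam β := by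
        rw [← hkey]; exact mul_pos h hPpos
      nlinarith
    · intro h
      have hpos : 0 < mval μ 1 * ∏ p ∈ Icc 2 n, mval μ p := by
        rw [hkey]
        exact mul_pos (by linarith) hLpos
      nlinarith
end
end

section
/- Fix real numbers λ_1 < … < λ_{n−1} and reals μ_1 < λ_1 < μ_2 < … < λ_{n−1} < μ_n interlacing them, and define ξ_α = −∏_{p=1}^{n}(μ_p−λ_α) / ∏_{1≤β≤n−1, β≠α}(λ_β−λ_α) and η = Σ_{p=1}^{n} μ_p − Σ_{β=1}^{n−1} λ_β. Then Σ_{p=1}^{n} μ_p² = Σ_{α=1}^{n−1} λ_α² + 2·Σ_{α=1}^{n−1} ξ_α + η². -/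
open MeasureTheory Complex Finset

noncomputable section

open Polynomial in
/-- second elementary-symmetric-like quantity -/
def E2 (s : Finset ℕ) (f : ℕ → ℝ) : ℝ := ((∑ i ∈ s, f i) ^ 2 - ∑ i ∈ s, f i ^ 2) / 2

open Polynomial in
lemma natDegree_prodXC (s : Finset ℕ) (f : ℕ → ℝ) :
    (∏ i ∈ s, (X - C (f i))).natDegree = s.card := by
  rw [natDegree_prod_of_monic _ _ (fun i _ => monic_X_sub_C _)]
  simp [natDegree_X_sub_C]

open Polynomial in
lemma monic_prodXC (s : Finset ℕ) (f : ℕ → ℝ) :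
    (∏ i ∈ s, (X - C (f i))).Monic :=
  monic_prod_of_monic _ _ fun i _ => monic_X_sub_C _

open Polynomial in
lemma coeff_E2 (s : Finset ℕ) : ∀ (k : ℕ) (f : ℕ → ℝ), s.card = k + 2 →
    (∏ i ∈ s, (X - C (f i))).coeff k = E2 s f := by
  induction s using Finset.cons_induction with
  | empty => intro k f h; simp at h
  | cons a t ha ih =>
    intro k f hcard
    rw [Finset.card_cons] at hcard
    rw [Finset.prod_cons, sub_mul, coeff_sub, coeff_C_mul]
    rcases k with _ | k'
    · -- t has card 1
      obtain ⟨b, rfl⟩ := Finset.card_eq_one.mp (by omega : t.card = 1)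
      have hX : (X * ∏ i ∈ {b}, (X - C (f i))).coeff 0 = 0 := by
        simp [mul_coeff_zero]
      rw [hX]
      simp only [Finset.prod_singleton, coeff_sub, coeff_X_zero, coeff_C_zero]
      have hab : a ≠ b := by simpa using ha
      simp only [E2, Finset.sum_cons, Finset.sum_singleton]
      ring
    · have h1 : (X * ∏ i ∈ t, (X - C (f i))).coeff (k' + 1) =
          (∏ i ∈ t, (X - C (f i))).coeff k' := coeff_X_mul _ _
      rw [h1]
      have h2 := ih k' f (by omega)
      have h3 : (∏ i ∈ t, (X - C (f i))).coeff (k' + 1) = -∑ i ∈ t, f i := by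
        have := prod_X_sub_C_coeff_card_pred t f (by omega : 0 < t.card)
        rwa [show t.card - 1 = k' + 1 by omega] at this
      rw [h2, h3]
      simp only [E2, Finset.sum_cons]
      ring

open Polynomial in
lemma basis_eq (s : Finset ℕ) (v : ℕ → ℝ) (i : ℕ) :
    Lagrange.basis s v i =
      C (∏ j ∈ s.erase i, (v i - v j)⁻¹) * ∏ j ∈ s.erase i, (X - C (v j)) := by
  simp only [Lagrange.basis, Lagrange.basisDivisor]
  rw [Finset.prod_mul_distrib, map_prod]

open Polynomial in
lemma coeff_eq_sum_eval (s : Finset ℕ) (v : ℕ → ℝ) (hvs : Set.InjOn v s)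
    (g : ℝ[X]) (hg : g.degree < s.card) :
    g.coeff (s.card - 1) = ∑ i ∈ s, g.eval (v i) * ∏ j ∈ s.erase i, (v i - v j)⁻¹ := by
  conv_lhs => rw [Lagrange.eq_interpolate hvs hg]
  rw [Lagrange.interpolate_apply, finset_sum_coeff]
  refine Finset.sum_congr rfl fun i hi => ?_
  rw [basis_eq, ← mul_assoc, ← C_mul, coeff_C_mul]
  have hcard : (s.erase i).card = s.card - 1 := Finset.card_erase_of_mem hi
  have hm : (∏ j ∈ s.erase i, (X - C (v j))).coeff (s.card - 1) = 1 := by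
    have := (monic_prodXC (s.erase i) v).coeff_natDegree
    rwa [natDegree_prodXC, hcard] at this
  rw [hm, mul_one]

lemma lam_mono {n : ℕ} (lam : ℕ → ℝ)
    (hlam : ∀ α : ℕ, 1 ≤ α → α + 1 ≤ n - 1 → lam α < lam (α + 1)) :
    ∀ a b, 1 ≤ a → a < b → b ≤ n - 1 → lam a < lam b := by
  intro a b ha hab hb
  induction b with
  | zero => omega
  | succ b ihb =>
    rcases Nat.lt_or_ge a b with h | h
    · exact (ihb h (by omega)).trans (hlam b (by omega) (by omega))
    · have : a = b := by omega
      subst this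
      exact hlam a ha (by omega)

lemma prod_neg_sub (s : Finset ℕ) (f g : ℕ → ℝ) :
    ∏ i ∈ s, (f i - g i) = (-1) ^ s.card * ∏ i ∈ s, (g i - f i) := by
  rw [← Finset.prod_const, ← Finset.prod_mul_distrib]
  exact Finset.prod_congr rfl fun i _ => by ring

open Polynomial
/-- Lemma 2.6: `Σ_p μ_p² = Σ_α λ_α² + 2 Σ_α ξ_α + η²`. -/
theorem anderson_sum_of_squares
    (n : ℕ) (hn : 1 ≤ n) (lam : ℕ → ℝ)
    (hlam : ∀ α : ℕ, 1 ≤ α → α + 1 ≤ n - 1 → lam α < lam (α + 1))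
    (μ : Fin n → ℝ) (hμ : μ ∈ Xi n lam) :
    ∑ p ∈ Icc 1 n, mval μ p ^ 2 =
      ∑ α ∈ Icc 1 (n - 1), lam α ^ 2 +
        2 * ∑ α ∈ Icc 1 (n - 1), xiv n lam μ α + etav n lam μ ^ 2 := by
  classical
  obtain ⟨m, rfl⟩ : ∃ m, n = m + 1 := ⟨n - 1, by omega⟩
  clear hn hμ
  simp only [Nat.add_sub_cancel] at *
  rcases Nat.eq_zero_or_pos m with rfl | hm
  · simp [etav]
  -- main case : m ≥ 1
  have hs : (Icc 1 m).card = m := by simp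
  have ht : (Icc 1 (m + 1)).card = m + 1 := by simp
  have hinj : Set.InjOn lam ↑(Icc 1 m) := by
    intro a hab b hbb hEq
    simp only [coe_Icc, Set.mem_Icc] at hab hbb
    by_contra hne
    rcases lt_or_gt_of_ne hne with h | h
    · exact absurd hEq (ne_of_lt (lam_mono (n := m + 1) lam hlam a b hab.1 h hbb.2))
    · exact absurd hEq.symm (ne_of_lt (lam_mono (n := m + 1) lam hlam b a hbb.1 h hab.2))
  set P : Polynomial ℝ := ∏ p ∈ Icc 1 (m + 1), (X - C (mval μ p)) with hP
  set Q : Polynomial ℝ := ∏ β ∈ Icc 1 m, (X - C (lam β)) with hQ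
  have hη : etav (m + 1) lam μ =
      (∑ p ∈ Icc 1 (m + 1), mval μ p) - ∑ β ∈ Icc 1 m, lam β := rfl
  set η := etav (m + 1) lam μ with hηdef
  set G : Polynomial ℝ := P - (X - C η) * Q with hG
  have hQmon : Q.Monic := monic_prodXC _ _
  have hPmon : P.Monic := monic_prodXC _ _
  have hQdeg : Q.natDegree = m := by rw [hQ, natDegree_prodXC, hs]
  have hPdeg : P.natDegree = m + 1 := by rw [hP, natDegree_prodXC, ht]
  have hP1 : P.coeff m = -∑ p ∈ Icc 1 (m + 1), mval μ p := by
    have h := prod_X_sub_C_coeff_card_pred (Icc 1 (m + 1)) (mval μ) (by rw [ht]; omega)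
    rwa [ht, Nat.add_sub_cancel] at h
  have hQ1 : Q.coeff (m - 1) = -∑ β ∈ Icc 1 m, lam β := by
    have h := prod_X_sub_C_coeff_card_pred (Icc 1 m) lam (by rw [hs]; omega)
    rwa [hs] at h
  have hP2 : P.coeff (m - 1) = E2 (Icc 1 (m + 1)) (mval μ) := by
    apply coeff_E2
    rw [ht]; omega
  have hXQ : (X * Q).coeff (m - 1) = E2 (Icc 1 m) lam := by
    rcases Nat.lt_or_ge m 2 with h2 | h2
    · have hm1 : m = 1 := by omega
      rw [hm1]
      rw [show (1 : ℕ) - 1 = 0 from rfl, mul_coeff_zero, coeff_X_zero, zero_mul]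
      rw [show Finset.Icc 1 1 = {1} from Finset.Icc_self 1]
      simp [E2]
    · rw [show m - 1 = (m - 2) + 1 by omega, coeff_X_mul]
      exact coeff_E2 _ _ _ (by rw [hs]; omega)
  have hprod : ∀ k, ((X - C η) * Q).coeff k = (X * Q).coeff k - η * Q.coeff k := by
    intro k; rw [sub_mul, coeff_sub, coeff_C_mul]
  have hGdeg : G.degree < ((Icc 1 m).card : WithBot ℕ) := by
    rw [hs, degree_lt_iff_coeff_zero]
    intro k hk
    have hGk : G.coeff k = P.coeff k - ((X * Q).coeff k - η * Q.coeff k) := by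
      rw [hG, coeff_sub, hprod k]
    obtain hkm | hkm | hk2 : k = m ∨ k = m + 1 ∨ m + 2 ≤ k := by omega
    · rw [hkm] at hGk ⊢
      have hx : (X * Q).coeff m = Q.coeff (m - 1) := by
        obtain ⟨j, hj⟩ : ∃ j, m = j + 1 := ⟨m - 1, by omega⟩
        rw [hj, coeff_X_mul, Nat.add_sub_cancel]
      have hq : Q.coeff m = 1 := by rw [← hQdeg]; exact hQmon.coeff_natDegree
      rw [hGk, hP1, hx, hQ1, hq, hη]
      ring
    · rw [hkm] at hGk ⊢
      have hx : (X * Q).coeff (m + 1) = Q.coeff m := coeff_X_mul _ _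
      have hq0 : Q.coeff (m + 1) = 0 := coeff_eq_zero_of_natDegree_lt (by rw [hQdeg]; omega)
      have hp : P.coeff (m + 1) = 1 := by rw [← hPdeg]; exact hPmon.coeff_natDegree
      have hq : Q.coeff m = 1 := by rw [← hQdeg]; exact hQmon.coeff_natDegree
      rw [hGk, hp, hx, hq, hq0]
      ring
    · have hp : P.coeff k = 0 := coeff_eq_zero_of_natDegree_lt (by rw [hPdeg]; omega)
      have hq : Q.coeff k = 0 := coeff_eq_zero_of_natDegree_lt (by rw [hQdeg]; omega)
      have hx : (X * Q).coeff k = Q.coeff (k - 1) := by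
        obtain ⟨j, hj⟩ : ∃ j, k = j + 1 := ⟨k - 1, by omega⟩
        rw [hj, coeff_X_mul, Nat.add_sub_cancel]
      have hq' : Q.coeff (k - 1) = 0 := coeff_eq_zero_of_natDegree_lt (by rw [hQdeg]; omega)
      rw [hGk, hp, hx, hq', hq]
      ring
  have hL := coeff_eq_sum_eval (Icc 1 m) lam hinj G hGdeg
  rw [hs] at hL
  have hterm : ∀ α ∈ Icc 1 m,
      G.eval (lam α) * ∏ β ∈ (Icc 1 m).erase α, (lam α - lam β)⁻¹
        = -xiv (m + 1) lam μ α := by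
    intro α hα
    have hQ0 : Q.eval (lam α) = 0 := by
      rw [hQ, eval_prod]
      exact Finset.prod_eq_zero hα (by simp)
    have hGev : G.eval (lam α) = ∏ p ∈ Icc 1 (m + 1), (lam α - mval μ p) := by
      rw [hG, eval_sub, eval_mul, hQ0, mul_zero, sub_zero, hP, eval_prod]
      simp
    have hD : (∏ β ∈ (Icc 1 m).erase α, (lam β - lam α)) ≠ 0 := by
      rw [Finset.prod_ne_zero_iff]
      intro β hβ
      rcases Finset.mem_erase.mp hβ with ⟨hβα, hβs⟩
      exact sub_ne_zero_of_ne (fun hc => hβα (hinj (Finset.mem_coe.mpr hβs) (Finset.mem_coe.mpr hα) hc))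
    rw [hGev, Finset.prod_inv_distrib,
      prod_neg_sub (Icc 1 (m + 1)) (fun _ => lam α) (mval μ),
      prod_neg_sub ((Icc 1 m).erase α) (fun _ => lam α) lam,
      Finset.card_erase_of_mem hα, hs, ht]
    simp only [xiv, Nat.add_sub_cancel]
    obtain ⟨m', rfl⟩ : ∃ m', m = m' + 1 := ⟨m - 1, by omega⟩
    have hpow : ((-1 : ℝ)) ^ m' ≠ 0 := by
      apply pow_ne_zero; norm_num
    simp only [Nat.add_sub_cancel]
    field_simp
    ring
  have hXiSum : ∑ α ∈ Icc 1 m, xiv (m + 1) lam μ α =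
      E2 (Icc 1 m) lam + η * (∑ β ∈ Icc 1 m, lam β) - E2 (Icc 1 (m + 1)) (mval μ) := by
    have h1 : G.coeff (m - 1) = -∑ α ∈ Icc 1 m, xiv (m + 1) lam μ α := by
      rw [hL, Finset.sum_congr rfl hterm, Finset.sum_neg_distrib]
    have h2 : G.coeff (m - 1) =
        E2 (Icc 1 (m + 1)) (mval μ) - E2 (Icc 1 m) lam - η * (∑ β ∈ Icc 1 m, lam β) := by
      rw [hG, coeff_sub, hprod, hP2, hXQ, hQ1]
      ring
    have := h1.symm.trans h2
    linarith
  rw [hXiSum, hη]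
  simp only [E2]
  ring
end
end
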